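/- arXiv:2604.04535 — 3 statements merged into one kernel-verified Lean document; each statement's English description precedes it below -/
import Mathlib

section
/- Let V be a finite set and Payoff : V × V → ℝ a function satisfying Payoff(h,c) + Payoff(c,h) ≤ 1 for all h,c ∈ V. Then the minimax value of the zero-sum game with this payoff is at most 1/2: there exists a probability distribution p over V such that for every c ∈ V, Σ_{h} p(h)·Payoff(h,c) ≤ 1/2. -/
/-!
By von Neumann's minimax theorem the game `(x, y) ↦ x ⬝ᵥ A *ᵥ y` of the payoff matrix `A`
on the standard simplex has a saddle point `(p, q)`. Against every pure strategy `c`, `p`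
then concedes at most the value `q ⬝ᵥ A *ᵥ q`, and
`2 (q ⬝ᵥ A *ᵥ q) = q ⬝ᵥ (A + Aᵀ) *ᵥ q ≤ (∑ q)² = 1`.
-/

open Finset Matrix

theorem LinearMap.exists_isSaddlePointOn {E F : Type*}
    [AddCommGroup E] [Module ℝ E] [TopologicalSpace E] [IsTopologicalAddGroup E]
    [ContinuousSMul ℝ E] [T2Space E] [FiniteDimensional ℝ E]
    [AddCommGroup F] [Module ℝ F] [TopologicalSpace F] [IsTopologicalAddGroup F]
    [ContinuousSMul ℝ F] [T2Space F] [FiniteDimensional ℝ F]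
    (B : E →ₗ[ℝ] F →ₗ[ℝ] ℝ) {X : Set E} {Y : Set F}
    (hX : X.Nonempty) (cX : Convex ℝ X) (kX : IsCompact X)
    (hY : Y.Nonempty) (cY : Convex ℝ Y) (kY : IsCompact Y) :
    ∃ a ∈ X, ∃ b ∈ Y, IsSaddlePointOn X Y (fun x y ↦ B x y) a b :=
  Sion.exists_isSaddlePointOn hX cX kX
    (fun y _ ↦
      (B.flip y).continuous_of_finiteDimensional.lowerSemicontinuous.lowerSemicontinuousOn X)
    (fun y _ ↦ ((B.flip y).convexOn cX).quasiconvexOn)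
    cY hY kY
    (fun x _ ↦
      (B x).continuous_of_finiteDimensional.upperSemicontinuous.upperSemicontinuousOn Y)
    (fun x _ ↦ ((B x).concaveOn cY).quasiconcaveOn)

theorem Matrix.two_mul_dotProduct_mulVec_self_le {n : Type*} [Fintype n] (M : Matrix n n ℝ)
    (hM : ∀ i j, M i j + M j i ≤ 1) {q : n → ℝ} (hq : 0 ≤ q) :
    2 * (q ⬝ᵥ M *ᵥ q) ≤ (∑ i, q i) ^ 2 := by
  have hsym : 2 * (q ⬝ᵥ M *ᵥ q) = ∑ i, ∑ j, q i * q j * (M i j + M j i) := by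
    simp only [dotProduct, mulVec, mul_sum, mul_add, sum_add_distrib, two_mul]
    congr 1
    · exact sum_congr rfl fun i _ ↦ sum_congr rfl fun j _ ↦ by ring
    · rw [sum_comm]; exact sum_congr rfl fun i _ ↦ sum_congr rfl fun j _ ↦ by ring
  calc 2 * (q ⬝ᵥ M *ᵥ q) = ∑ i, ∑ j, q i * q j * (M i j + M j i) := hsym
    _ ≤ ∑ i, ∑ j, q i * q j :=
      sum_le_sum fun i _ ↦ sum_le_sum fun j _ ↦
        mul_le_of_le_one_right (mul_nonneg (hq i) (hq j)) (hM i j)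
    _ = (∑ i, q i) ^ 2 := by rw [sq, sum_mul_sum]

/-- if `Payoff(h,c) + Payoff(c,h) ≤ 1` for all `h, c` in a finite set `V`,
then the minimax value of the zero-sum game is at most `1/2`: there is a probability
distribution `p` on `V` such that for every pure adversary strategy `c`,
`∑ h, p(h) · Payoff(h,c) ≤ 1/2`. -/
theorem stmt3 {V : Type*} [Fintype V] [Nonempty V] (Payoff : V → V → ℝ)
    (hsym : ∀ h c : V, Payoff h c + Payoff c h ≤ 1) :
    ∃ p : V → ℝ, (∀ h, 0 ≤ p h) ∧ (∑ h, p h = 1) ∧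
      ∀ c : V, ∑ h, p h * Payoff h c ≤ 1 / 2 := by
  classical
  let A : Matrix V V ℝ := .of Payoff
  have hΔ : (stdSimplex ℝ V).Nonempty := ⟨_, single_mem_stdSimplex ℝ (Classical.arbitrary V)⟩
  obtain ⟨p, hp, q, hq, hsaddle⟩ := (toLinearMap₂' ℝ A).exists_isSaddlePointOn
    hΔ (convex_stdSimplex ℝ V) (isCompact_stdSimplex ℝ V)
    hΔ (convex_stdSimplex ℝ V) (isCompact_stdSimplex ℝ V)
  simp only [toLinearMap₂'_apply'] at hsaddle
  refine ⟨p, hp.1, hp.2, fun c ↦ ?_⟩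
  have hqq : 2 * (q ⬝ᵥ A *ᵥ q) ≤ 1 := by
    simpa [hq.2] using A.two_mul_dotProduct_mulVec_self_le hsym hq.1
  calc ∑ h, p h * Payoff h c = p ⬝ᵥ A *ᵥ Pi.single c 1 := by
        simp [A, dotProduct]
    _ ≤ q ⬝ᵥ A *ᵥ q := hsaddle q hq _ (single_mem_stdSimplex ℝ c)
    _ ≤ 1 / 2 := by linarith
end

section
/- Let T be a complete binary tree of depth d, and let a target leaf ℓ be chosen uniformly at random among the 2^d leaves. Fix any node-selection process where in each round an arbitrary (possibly adaptive, history-dependent) root-to-leaf path π is chosen, and the process reveals the node at which π first diverges from the path to ℓ (descending the 'current subtree' to the child consistent with ℓ). If K_t denotes the depth of the current subtree containing the consistent continuation, with K₀ = d, then for every round t and every i ∈ {1,...,k}, conditioned on K_t = k and the history, the probability that the depth decreases by at least i in one round is at most 2^{-(i-1)}; hence E[K_t − K_{t+1} | K_t = k] ≤ 2. -/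
/-- The length of the initial prefix on which `ℓ` agrees with the chosen path `π`
in a complete binary tree of depth `k` (paths are identified with `Fin k → Bool`). -/
def agreePrefixLen {k : ℕ} (π ℓ : Fin k → Bool) : ℕ :=
  ((Finset.range k).filter (fun i => ∀ j : Fin k, (j : ℕ) ≤ i → ℓ j = π j)).card

/-- The decrease in depth of the current subtree in one round in which the path `π` is
chosen and the target path is `ℓ`: the depth drops from `k` to `k − (A + 1)` where `A` is
the length of the agreeing prefix (capped at depth `k`). -/
def depthDecrease {k : ℕ} (π ℓ : Fin k → Bool) : ℕ :=
  min k (agreePrefixLen π ℓ + 1)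

lemma agree_ge_iff {k : ℕ} (m : ℕ) (hm : m ≤ k) (π ℓ : Fin k → Bool) :
    m ≤ agreePrefixLen π ℓ ↔ ∀ j : Fin k, (j : ℕ) < m → ℓ j = π j := by
  unfold agreePrefixLen
  constructor
  · intro h j hj
    rcases Nat.eq_zero_or_pos m with hm0 | hm0
    · omega
    have hex : ∃ x ∈ (Finset.range k).filter
        (fun i => ∀ j : Fin k, (j : ℕ) ≤ i → ℓ j = π j), m - 1 ≤ x := by
      by_contra hcon
      push_neg at hcon
      have hsub : (Finset.range k).filter
          (fun i => ∀ j : Fin k, (j : ℕ) ≤ i → ℓ j = π j) ⊆ Finset.range (m - 1) := by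
        intro x hx
        simp only [Finset.mem_range]
        have := hcon x hx
        omega
      have := Finset.card_le_card hsub
      simp [Finset.card_range] at this
      omega
    obtain ⟨x, hx, hmx⟩ := hex
    simp only [Finset.mem_filter, Finset.mem_range] at hx
    exact hx.2 j (by omega)
  · intro h
    have hsub : Finset.range m ⊆ (Finset.range k).filter
        (fun i => ∀ j : Fin k, (j : ℕ) ≤ i → ℓ j = π j) := by
      intro x hx
      simp only [Finset.mem_range] at hx
      simp only [Finset.mem_filter, Finset.mem_range]
      exact ⟨by omega, fun j hj => h j (by omega)⟩
    have := Finset.card_le_card hsub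
    simpa [Finset.card_range] using this

lemma count_agree {k : ℕ} (m : ℕ) (hm : m ≤ k) (π : Fin k → Bool) :
    (Finset.univ.filter fun ℓ : Fin k → Bool =>
      ∀ j : Fin k, (j : ℕ) < m → ℓ j = π j).card * 2 ^ m ≤ 2 ^ k := by
  classical
  set S := Finset.univ.filter fun ℓ : Fin k → Bool =>
      ∀ j : Fin k, (j : ℕ) < m → ℓ j = π j with hS
  set F : (Fin k → Bool) × (Fin m → Bool) → (Fin k → Bool) :=
    fun p j => if h : (j : ℕ) < m then p.2 ⟨j, h⟩ else p.1 j with hF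
  have hinj : Set.InjOn F ((S ×ˢ (Finset.univ : Finset (Fin m → Bool)) : Finset _) : Set _) := by
    rintro ⟨ℓ1, b1⟩ h1 ⟨ℓ2, b2⟩ h2 heq
    simp only [Finset.mem_coe, Finset.mem_product, hS,
      Finset.mem_filter, Finset.mem_univ, true_and, and_true] at h1 h2
    have heqfun : ∀ j : Fin k, F (ℓ1, b1) j = F (ℓ2, b2) j := fun j => congrFun heq j
    refine Prod.ext ?_ ?_ <;> dsimp only
    · funext j
      by_cases hj : (j : ℕ) < m
      · rw [h1 j hj, h2 j hj]
      · have := heqfun j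
        simp only [hF, dif_neg hj] at this
        exact this
    · funext x
      have hx : (x : ℕ) < k := lt_of_lt_of_le x.2 hm
      have := heqfun ⟨x, hx⟩
      simp only [hF, dif_pos x.2] at this
      simpa using this
  have hcard : (S ×ˢ (Finset.univ : Finset (Fin m → Bool))).card
      = ((S ×ˢ (Finset.univ : Finset (Fin m → Bool))).image F).card :=
    (Finset.card_image_of_injOn hinj).symm
  have hle : ((S ×ˢ (Finset.univ : Finset (Fin m → Bool))).image F).card
      ≤ (Finset.univ : Finset (Fin k → Bool)).card :=
    Finset.card_le_card (Finset.subset_univ _)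
  have h1 : (S ×ˢ (Finset.univ : Finset (Fin m → Bool))).card = S.card * 2 ^ m := by
    rw [Finset.card_product]
    simp [Finset.card_univ]
  have h2 : (Finset.univ : Finset (Fin k → Bool)).card = 2 ^ k := by
    simp [Finset.card_univ]
  omega
lemma dd_le {k : ℕ} (π ℓ : Fin k → Bool) : depthDecrease π ℓ ≤ k := min_le_left _ _

lemma dd_ge_iff {k : ℕ} (i : ℕ) (hi : 1 ≤ i) (hik : i ≤ k) (π ℓ : Fin k → Bool) :
    i ≤ depthDecrease π ℓ ↔ ∀ j : Fin k, (j : ℕ) < i - 1 → ℓ j = π j := by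
  unfold depthDecrease
  rw [le_min_iff]
  have : (i ≤ k ∧ i ≤ agreePrefixLen π ℓ + 1) ↔ i - 1 ≤ agreePrefixLen π ℓ := by
    omega
  rw [this, agree_ge_iff (i - 1) (by omega)]

/-- with the target leaf uniform among the `2^k` leaves of the current
depth-`k` subtree and an arbitrary (history-dependent, hence fixed under the
conditioning) chosen root-to-leaf path `π`, for every `i ≥ 1` the probability that the
depth decreases by at least `i` is at most `2^{-(i-1)}` (stated as a counting bound over
the uniform target), and hence the expected depth decrease is at most `2`. -/
theorem stmt6 (k : ℕ) (π : Fin k → Bool) :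
    (∀ i : ℕ, 1 ≤ i →
      ((Finset.univ.filter fun ℓ : Fin k → Bool => i ≤ depthDecrease π ℓ).card)
        * 2 ^ (i - 1) ≤ 2 ^ k) ∧
    (∑ ℓ : Fin k → Bool, depthDecrease π ℓ) ≤ 2 * 2 ^ k := by
  classical
  have key : ∀ i : ℕ, 1 ≤ i →
      ((Finset.univ.filter fun ℓ : Fin k → Bool => i ≤ depthDecrease π ℓ).card)
        * 2 ^ (i - 1) ≤ 2 ^ k := by
    intro i hi
    by_cases hik : i ≤ k
    · have hfe : (Finset.univ.filter fun ℓ : Fin k → Bool => i ≤ depthDecrease π ℓ)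
          = Finset.univ.filter fun ℓ : Fin k → Bool =>
              ∀ j : Fin k, (j : ℕ) < i - 1 → ℓ j = π j := by
        apply Finset.filter_congr
        intro ℓ _
        simp [dd_ge_iff i hi hik]
      rw [hfe]
      exact count_agree (i - 1) (by omega) π
    · have : (Finset.univ.filter fun ℓ : Fin k → Bool => i ≤ depthDecrease π ℓ) = ∅ := by
        apply Finset.filter_false_of_mem
        intro ℓ _
        have := dd_le π ℓ
        omega
      simp [this]
  refine ⟨key, ?_⟩
  have hdd : ∀ ℓ : Fin k → Bool, depthDecrease π ℓ
      = ((Finset.range k).filter fun i => i + 1 ≤ depthDecrease π ℓ).card := by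
    intro ℓ
    have h1 : ((Finset.range k).filter fun i => i + 1 ≤ depthDecrease π ℓ)
        = Finset.range (depthDecrease π ℓ) := by
      ext x
      simp only [Finset.mem_filter, Finset.mem_range]
      have := dd_le π ℓ
      omega
    rw [h1, Finset.card_range]
  calc (∑ ℓ : Fin k → Bool, depthDecrease π ℓ)
      = ∑ ℓ : Fin k → Bool, ∑ i ∈ Finset.range k,
          (if i + 1 ≤ depthDecrease π ℓ then 1 else 0) := by
        refine Finset.sum_congr rfl fun ℓ _ => ?_
        conv_lhs => rw [hdd ℓ, Finset.card_filter]
    _ = ∑ i ∈ Finset.range k, ∑ ℓ : Fin k → Bool,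
          (if i + 1 ≤ depthDecrease π ℓ then 1 else 0) := Finset.sum_comm
    _ = ∑ i ∈ Finset.range k,
          (Finset.univ.filter fun ℓ : Fin k → Bool => i + 1 ≤ depthDecrease π ℓ).card := by
        refine Finset.sum_congr rfl fun i _ => ?_
        rw [Finset.card_filter]
    _ ≤ ∑ i ∈ Finset.range k, 2 ^ (k - i) := by
        refine Finset.sum_le_sum fun i hi => ?_
        have hk := key (i + 1) (by omega)
        simp only [Nat.add_sub_cancel] at hk
        have hik : i < k := Finset.mem_range.mp hi
        have h2 : (2 : ℕ) ^ k = 2 ^ (k - i) * 2 ^ i := by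
          rw [← pow_add]; congr 1; omega
        rw [h2] at hk
        exact Nat.le_of_mul_le_mul_right hk (by positivity)
    _ = ∑ i ∈ Finset.range k, 2 ^ (i + 1) := by
        rw [← Finset.sum_range_reflect]
        refine Finset.sum_congr rfl fun i hi => ?_
        have := Finset.mem_range.mp hi
        congr 1
        omega
    _ ≤ 2 * 2 ^ k := by
        have : ∑ i ∈ Finset.range k, 2 ^ (i + 1) = 2 * ∑ i ∈ Finset.range k, 2 ^ i := by
          rw [Finset.mul_sum]
          refine Finset.sum_congr rfl fun i _ => by ring
        rw [this, Nat.geomSum_eq (le_refl 2)]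
        omega
end

section
/- Let k ≥ 2 be an integer and let a, b > 0 be positive reals. Then −ln(1 − (k−1)/k³ + a/(bk)) − ln(1 − (k−1)/k³ + b/(ak)) ≤ −1/(6k). -/
/-!
Write `c = 1 - (k-1)/k³`. Since `a/(bk) · b/(ak) = 1/k²`, AM–GM gives
`(c + a/(bk))(c + b/(ak)) ≥ (c + 1/k)²`, and `c + 1/k ≥ 1 + 1/(2k)` for `k ≥ 2`, so the product is
at least `1 + 1/k`. The bound `log (1 + t) ≥ 2t/(t + 2)` then leaves `2/(2k + 1) ≥ 1/(6k)`.
-/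

open Real

lemma sq_add_le_add_mul_add {c x y r : ℝ} (hc : 0 ≤ c) (hx : 0 ≤ x) (hy : 0 ≤ y)
    (hxy : x * y = r ^ 2) : (c + r) ^ 2 ≤ (c + x) * (c + y) := by
  have hsum : 2 * r ≤ x + y := by nlinarith [sq_nonneg (x - y)]
  nlinarith

lemma one_sub_div_cube_nonneg {K : ℝ} (hK : 2 ≤ K) : 0 ≤ 1 - (K - 1) / K ^ 3 := by
  rw [sub_nonneg, div_le_one (by positivity)]
  nlinarith [mul_nonneg (by linarith : (0 : ℝ) ≤ K) (sq_nonneg K)]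

lemma one_add_inv_le_sq_one_sub_div_cube_add_inv {K : ℝ} (hK : 2 ≤ K) :
    1 + 1 / K ≤ (1 - (K - 1) / K ^ 3 + 1 / K) ^ 2 := by
  have hK0 : 0 < K := by linarith
  have hhalf : 1 / K = 2 * (1 / (2 * K)) := by field_simp
  have hcube : (K - 1) / K ^ 3 ≤ 1 / (2 * K) := by
    rw [div_le_div_iff₀ (by positivity) (by positivity)]
    nlinarith [sq_nonneg (K - 1)]
  calc 1 + 1 / K ≤ (1 + 1 / (2 * K)) ^ 2 := by nlinarith [sq_nonneg (1 / (2 * K))]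
    _ ≤ _ := pow_le_pow_left₀ (by positivity) (by linarith) 2

lemma inv_six_mul_le_log_one_add_inv {K : ℝ} (hK : 1 ≤ K) : 1 / (6 * K) ≤ log (1 + 1 / K) := by
  refine le_trans ?_ (le_log_one_add_of_nonneg (by positivity))
  rw [div_le_div_iff₀ (by positivity) (by positivity)]
  field_simp
  nlinarith

/-- for every integer `k ≥ 2` and positive reals `a, b`,
`−ln(1 − (k−1)/k³ + a/(bk)) − ln(1 − (k−1)/k³ + b/(ak)) ≤ −1/(6k)`. -/
theorem stmt13 (k : ℕ) (hk : 2 ≤ k) (a b : ℝ) (ha : 0 < a) (hb : 0 < b) :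
    -Real.log (1 - ((k : ℝ) - 1) / (k : ℝ) ^ 3 + a / (b * k))
      - Real.log (1 - ((k : ℝ) - 1) / (k : ℝ) ^ 3 + b / (a * k)) ≤ -(1 / (6 * k)) := by
  have hK : (2 : ℝ) ≤ k := by exact_mod_cast hk
  set K : ℝ := (k : ℝ)
  set c : ℝ := 1 - (K - 1) / K ^ 3
  have hc : 0 ≤ c := one_sub_div_cube_nonneg hK
  have hprod : (c + 1 / K) ^ 2 ≤ (c + a / (b * K)) * (c + b / (a * K)) :=
    sq_add_le_add_mul_add hc (by positivity) (by positivity) (by field_simp)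
  have hlog : 1 / (6 * K) ≤ log (c + a / (b * K)) + log (c + b / (a * K)) := by
    rw [← log_mul (by positivity) (by positivity)]
    calc 1 / (6 * K) ≤ log (1 + 1 / K) := inv_six_mul_le_log_one_add_inv (by linarith)
      _ ≤ _ := log_le_log (by positivity)
        ((one_add_inv_le_sq_one_sub_div_cube_add_inv hK).trans hprod)
  linarith
end
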